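/- Let d ≥ 3, x0 ∈ (0,1/4), ε ∈ (0,1), and let σ = σ_d be the unique positive solution of x0²/(2σ²) = log( dσ/(√(2π) ε x0) ). Let ξ⁺ be uniform on B^d_+ = {β ∈ B^d : ∏ β_i > 0}, ξ⁻ uniform on B^d_− = {β ∈ B^d : ∏ β_i < 0}, and X ~ N(0, σ² Id) independent of (ξ⁺, ξ⁻); set Z⁺ = ξ⁺ + X and Z⁻ = ξ⁻ + X. Then with probability at least 1 − 2ε, simultaneously F(Z⁺) = 1 and F(Z⁻) = −1 when d ≡ 0,1 (mod 4), and F(Z⁺) = −1 and F(Z⁻) = 1 when d ≡ 2,3 (mod 4). Consequently |E[F(Z⁺)] − E[F(Z⁻)]| ≥ 2 − 8ε. -/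

import Mathlib

/-!
Except with probability `d · 2σ / (√(2π) x0) · exp (-x0² / (2σ²))` (Mills' inequality and a union
bound), every coordinate of the noise is at most `x0` in absolute value, and the defining equation
of `σ` makes this probability `2ε`. On that event `f1 (β + t) = sign β` for `β ∈ B`, because `f1` is
a sum of unit-height trapezoids `sign β · bump / x0` whose plateaus of half-width `x0` sit at the
points of `B`.
Hence `∑ᵢ f1 (βᵢ + Xᵢ) = d - 2k`, where `k` counts the negative coordinates of `β`; the zig-zag `f2`
takes the value `(-1) ^ (d / 2) · (-1) ^ k` there, and `(-1) ^ k` is the sign of `∏ᵢ βᵢ`. As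
`|F| ≤ 1`, the two expectations then differ by at least `2 (1 - 2ε) - 2 · 2ε`.
-/

open MeasureTheory ProbabilityTheory
open scoped ENNReal NNReal

noncomputable section

/-- `ReLU(t) = max(t, 0)`. -/
def relu (t : ℝ) : ℝ := max t 0

/-- The set `B = {-3/2, -1/2, 1/2, 3/2}` as a finset of reals. -/
def Bset : Finset ℝ := {-3/2, -1/2, 1/2, 3/2}

/-- The points of `B^d` with positive product of coordinates. -/
def BdPlus (d : ℕ) : Finset (Fin d → ℝ) :=
  (Fintype.piFinset fun _ : Fin d => Bset).filter fun β => 0 < ∏ i, β i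

/-- The points of `B^d` with negative product of coordinates. -/
def BdMinus (d : ℕ) : Finset (Fin d → ℝ) :=
  (Fintype.piFinset fun _ : Fin d => Bset).filter fun β => ∏ i, β i < 0

/-- The two-layer bump network `f1`. -/
def f1 (x0 : ℝ) (x : ℝ) : ℝ :=
  ∑ β ∈ Bset, (Real.sign β / x0) *
    (relu (x - (β - 2 * x0)) - relu (x - (β - x0)) - relu (x - (β + x0)) +
      relu (x - (β + 2 * x0)))

/-- The two-layer zig-zag network `f2` (even and odd versions). -/
def f2 (d : ℕ) (x : ℝ) : ℝ :=
  if Even d then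
    1 - relu x - relu (-x) - (-1 : ℝ) ^ (d / 2) * (relu (x - d) + relu (-x - d)) -
      2 * ∑ i ∈ Finset.Icc 1 ((d - 2) / 2),
        (-1 : ℝ) ^ i * (relu (x - 2 * i) + relu (-x - 2 * i))
  else
    x + (-1 : ℝ) ^ ((d - 1) / 2) * (-relu (x - d) + relu (-x - d)) +
      2 * ∑ i ∈ Finset.range ((d - 1) / 2),
        (-1 : ℝ) ^ i * (-relu (x - (2 * i + 1)) + relu (-x - (2 * i + 1)))

/-- The three-layer discriminator `F(x) = f2(∑_i f1(x_i))`. -/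
def Fdisc (d : ℕ) (x0 : ℝ) (x : Fin d → ℝ) : ℝ :=
  f2 d (∑ i, f1 x0 (x i))

open Finset

lemma relu_of_nonneg {t : ℝ} (h : 0 ≤ t) : relu t = t := max_eq_left h

lemma relu_of_nonpos {t : ℝ} (h : t ≤ 0) : relu t = 0 := max_eq_right h

@[fun_prop]
lemma continuous_relu : Continuous relu := continuous_id.max continuous_const

/-! ### The bump network `f1` -/

/-- The trapezoid of height `x0` with plateau `[c - x0, c + x0]` and support
`[c - 2 x0, c + 2 x0]`. -/
def bump (x0 c x : ℝ) : ℝ :=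
  relu (x - (c - 2 * x0)) - relu (x - (c - x0)) - relu (x - (c + x0)) + relu (x - (c + 2 * x0))

lemma f1_eq_sum_bump (x0 x : ℝ) : f1 x0 x = ∑ β ∈ Bset, Real.sign β / x0 * bump x0 β x := rfl

lemma bump_eq_of_abs_sub_le {x0 c x : ℝ} (h : |x - c| ≤ x0) : bump x0 c x = x0 := by
  obtain ⟨h₁, h₂⟩ := abs_le.mp h
  rw [bump, relu_of_nonneg (by linarith), relu_of_nonneg (by linarith),
    relu_of_nonpos (by linarith), relu_of_nonpos (by linarith)]
  ring

lemma bump_eq_zero_of_le_abs_sub {x0 c x : ℝ} (hx0 : 0 ≤ x0) (h : 2 * x0 ≤ |x - c|) :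
    bump x0 c x = 0 := by
  rcases le_abs'.mp h with h | h
  · rw [bump, relu_of_nonpos (by linarith), relu_of_nonpos (by linarith),
      relu_of_nonpos (by linarith), relu_of_nonpos (by linarith)]
    ring
  · rw [bump, relu_of_nonneg (by linarith), relu_of_nonneg (by linarith),
      relu_of_nonneg (by linarith), relu_of_nonneg (by linarith)]
    ring

lemma bump_mem_Icc {x0 : ℝ} (hx0 : 0 ≤ x0) (c x : ℝ) : bump x0 c x ∈ Set.Icc 0 x0 := by
  simp only [bump, relu, max_def, Set.mem_Icc]
  constructor <;> split_ifs <;> linarith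

lemma one_le_abs_sub_of_mem_Bset {b β : ℝ} (hb : b ∈ Bset) (hβ : β ∈ Bset) (hne : β ≠ b) :
    1 ≤ |b - β| := by
  simp only [Bset, Finset.mem_insert, Finset.mem_singleton] at hb hβ
  rcases hb with rfl | rfl | rfl | rfl <;> rcases hβ with rfl | rfl | rfl | rfl <;>
    first | exact absurd rfl hne | norm_num [abs_of_pos, abs_of_neg]

lemma one_sub_abs_sub_le_abs_sub {b β : ℝ} (hb : b ∈ Bset) (hβ : β ∈ Bset) (hne : β ≠ b) (x : ℝ) :
    1 - |x - b| ≤ |x - β| := by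
  have := abs_sub_le b x β
  rw [abs_sub_comm b x] at this
  linarith [one_le_abs_sub_of_mem_Bset hb hβ hne]

lemma f1_eq_sign_div_mul_bump {x0 x b : ℝ} (hx0 : 0 ≤ x0) (hb : b ∈ Bset)
    (hsep : ∀ β ∈ Bset, β ≠ b → 2 * x0 ≤ |x - β|) :
    f1 x0 x = Real.sign b / x0 * bump x0 b x := by
  rw [f1_eq_sum_bump, Finset.sum_eq_single_of_mem b hb]
  intro β hβ hne
  rw [bump_eq_zero_of_le_abs_sub hx0 (hsep β hβ hne), mul_zero]

lemma f1_add_of_mem_Bset {x0 b t : ℝ} (hx0 : 0 < x0) (hx0' : 3 * x0 ≤ 1) (hb : b ∈ Bset)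
    (ht : |t| ≤ x0) : f1 x0 (b + t) = Real.sign b := by
  have hbt : |b + t - b| ≤ x0 := by rwa [add_sub_cancel_left]
  rw [f1_eq_sign_div_mul_bump hx0.le hb fun β hβ hne => ?_, bump_eq_of_abs_sub_le hbt,
    div_mul_cancel₀ _ hx0.ne']
  linarith [one_sub_abs_sub_le_abs_sub hb hβ hne (b + t)]

lemma abs_f1_le_one {x0 : ℝ} (hx0 : 0 < x0) (hx0' : 4 * x0 ≤ 1) (x : ℝ) : |f1 x0 x| ≤ 1 := by
  by_cases hnear : ∃ b ∈ Bset, |x - b| < 2 * x0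
  · obtain ⟨b, hb, hxb⟩ := hnear
    rw [f1_eq_sign_div_mul_bump hx0.le hb fun β hβ hne => by
      linarith [one_sub_abs_sub_le_abs_sub hb hβ hne x]]
    obtain ⟨h₀, h₁⟩ := bump_mem_Icc hx0.le b x
    have hsign : |Real.sign b| ≤ 1 := by
      rcases Real.sign_apply_eq b with h | h | h <;> simp [h]
    rw [abs_mul, abs_div, abs_of_pos hx0, abs_of_nonneg h₀, div_mul_eq_mul_div, div_le_one hx0]
    nlinarith [abs_nonneg (Real.sign b)]
  · push Not at hnear
    rw [f1_eq_sum_bump, Finset.sum_eq_zero fun β hβ => by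
      rw [bump_eq_zero_of_le_abs_sub hx0.le (hnear β hβ), mul_zero]]
    norm_num

/-! ### The zig-zag network `f2` -/

/-- The triangle wave on `[0, 2n + 1]` with slopes `±1`, zeros at the even and values
`(-1) ^ j` at the odd integers `2j + 1`. -/
def zigzag (n : ℕ) (s : ℝ) : ℝ :=
  s - 2 * ∑ i ∈ Finset.range n, (-1 : ℝ) ^ i * relu (s - (2 * i + 1))

lemma zigzag_succ (n : ℕ) (s : ℝ) :
    zigzag (n + 1) s = zigzag n s - 2 * (-1) ^ n * relu (s - (2 * n + 1)) := by
  rw [zigzag, zigzag, Finset.sum_range_succ]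
  ring

lemma zigzag_succ_of_le {n : ℕ} {s : ℝ} (hs : s ≤ 2 * n + 1) : zigzag (n + 1) s = zigzag n s := by
  rw [zigzag_succ, relu_of_nonpos (by linarith)]
  ring

lemma zigzag_eq_zigzag_of_le {m n : ℕ} (hmn : m ≤ n) {s : ℝ} (hs : s ≤ 2 * m + 1) :
    zigzag n s = zigzag m s := by
  induction n, hmn using Nat.le_induction with
  | base => rfl
  | succ n hmn ih =>
    have : (m : ℝ) ≤ n := by exact_mod_cast hmn
    rw [zigzag_succ_of_le (by linarith), ih]

lemma zigzag_eq_neg_one_pow_mul {n : ℕ} {s : ℝ} (hs : 2 * n - 1 ≤ s) :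
    zigzag n s = (-1) ^ n * (s - 2 * n) := by
  induction n with
  | zero => simp [zigzag]
  | succ n ih =>
    push_cast at hs
    rw [zigzag_succ, ih (by linarith), relu_of_nonneg (by linarith), pow_succ]
    push_cast
    ring

lemma zigzag_two_mul_add_one {j n : ℕ} (hjn : j ≤ n) : zigzag n (2 * j + 1) = (-1) ^ j := by
  rw [zigzag_eq_zigzag_of_le hjn le_rfl, zigzag_eq_neg_one_pow_mul (by linarith)]
  ring

lemma abs_zigzag_le_one {n : ℕ} {s : ℝ} (h₀ : 0 ≤ s) (hs : s ≤ 2 * n + 1) : |zigzag n s| ≤ 1 := by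
  induction n with
  | zero =>
    rw [zigzag, Finset.sum_range_zero, mul_zero, sub_zero, abs_le]
    push_cast at hs
    constructor <;> linarith
  | succ n ih =>
    rcases le_total s (2 * n + 1) with h | h
    · rw [zigzag_succ_of_le h]
      exact ih h
    · push_cast at hs
      rw [zigzag_eq_neg_one_pow_mul (by push_cast; linarith), abs_mul, abs_pow, abs_neg, abs_one,
        one_pow, one_mul, abs_le]
      push_cast
      constructor <;> linarith

lemma f2_odd_eq_zigzag {n : ℕ} {s : ℝ} (h₀ : 0 ≤ s) (hs : s ≤ 2 * n + 1) :
    f2 (2 * n + 1) s = zigzag n s := by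
  have hneg : ∀ i : ℕ, relu (-s - (2 * i + 1)) = 0 := fun i =>
    relu_of_nonpos (by linarith [(Nat.cast_nonneg i : (0 : ℝ) ≤ i)])
  rw [f2, if_neg (Nat.not_even_two_mul_add_one n), show (2 * n + 1 - 1) / 2 = n by omega, zigzag]
  push_cast
  rw [relu_of_nonpos (by linarith), relu_of_nonpos (by linarith)]
  simp only [hneg, add_zero, mul_neg, Finset.sum_neg_distrib]
  ring

lemma f2_even_eq_zigzag {n : ℕ} {s : ℝ} (h₀ : 0 ≤ s) (hs : s ≤ 2 * n + 2) :
    f2 (2 * n + 2) s = zigzag (n + 1) (s + 1) := by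
  have hIcc : ∑ i ∈ Finset.Icc 1 n, (-1 : ℝ) ^ i * (relu (s - 2 * i) + relu (-s - 2 * i)) =
      ∑ i ∈ Finset.range n, (-1 : ℝ) ^ (i + 1) * relu (s + 1 - (2 * (i + 1 : ℕ) + 1)) := by
    rw [← Finset.Ico_add_one_right_eq_Icc, Finset.sum_Ico_eq_sum_range, Nat.add_sub_cancel]
    refine Finset.sum_congr rfl fun i _ => ?_
    push_cast
    rw [relu_of_nonpos (t := -s - _) (by linarith [(Nat.cast_nonneg i : (0 : ℝ) ≤ i)]),
      add_comm 1 i]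
    ring_nf
  rw [f2, if_pos ⟨n + 1, by ring⟩, show (2 * n + 2 - 2) / 2 = n by omega, hIcc, zigzag,
    Finset.sum_range_succ']
  push_cast
  rw [relu_of_nonpos (t := -s) (by linarith), relu_of_nonpos (t := s - _) (by linarith),
    relu_of_nonpos (t := -s - _) (by linarith), show s + 1 - (2 * 0 + 1) = s by ring,
    relu_of_nonneg h₀]
  ring

lemma f2_neg (d : ℕ) (x : ℝ) : f2 d (-x) = (-1) ^ d * f2 d x := by
  unfold f2
  split_ifs with hd
  · rw [hd.neg_one_pow, one_mul, neg_neg,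
      Finset.sum_congr rfl fun i _ => by rw [add_comm (relu (-x - _))]]
    ring
  · have hterm : ∀ i : ℕ, (-1 : ℝ) ^ i * (-relu (-x - (2 * i + 1)) + relu (x - (2 * i + 1))) =
        -((-1) ^ i * (-relu (x - (2 * i + 1)) + relu (-x - (2 * i + 1)))) := fun i => by ring
    rw [(Nat.not_even_iff_odd.mp hd).neg_one_pow, neg_neg]
    simp only [hterm, Finset.sum_neg_distrib]
    ring

lemma neg_one_pow_sub {m k : ℕ} (hkm : k ≤ m) : (-1 : ℝ) ^ (m - k) = (-1) ^ m * (-1) ^ k := by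
  obtain ⟨j, rfl⟩ := Nat.exists_eq_add_of_le hkm
  rw [Nat.add_sub_cancel_left, pow_add, mul_right_comm, ← pow_add, ← two_mul, pow_mul]
  norm_num

lemma f2_sub_two_mul_of_two_mul_le {d k : ℕ} (hd : 0 < d) (hk : 2 * k ≤ d) :
    f2 d (d - 2 * k) = (-1) ^ (d / 2) * (-1) ^ k := by
  have hk' : (2 * k : ℝ) ≤ d := by exact_mod_cast hk
  have h₀ : (0 : ℝ) ≤ d - 2 * k := by linarith
  have hs : (d : ℝ) - 2 * k ≤ d := by linarith [(Nat.cast_nonneg k : (0 : ℝ) ≤ k)]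
  obtain ⟨n, rfl | rfl⟩ := Nat.even_or_odd' d
  · obtain ⟨m, rfl⟩ : ∃ m, n = m + 1 := Nat.exists_eq_succ_of_ne_zero (by omega)
    have hj : ((2 * (m + 1) : ℕ) : ℝ) - 2 * k + 1 = 2 * (m + 1 - k : ℕ) + 1 := by
      push_cast [show k ≤ m + 1 by omega]
      ring
    rw [show 2 * (m + 1) = 2 * m + 2 by ring] at h₀ hs hj ⊢
    push_cast at h₀ hs hj ⊢
    rw [f2_even_eq_zigzag h₀ hs, hj, zigzag_two_mul_add_one (by omega), neg_one_pow_sub (by omega),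
      show (2 * m + 2) / 2 = m + 1 by omega]
  · have hj : ((2 * n + 1 : ℕ) : ℝ) - 2 * k = 2 * (n - k : ℕ) + 1 := by
      push_cast [show k ≤ n by omega]
      ring
    push_cast at h₀ hs hj ⊢
    rw [f2_odd_eq_zigzag h₀ hs, hj, zigzag_two_mul_add_one (by omega), neg_one_pow_sub (by omega),
      show (2 * n + 1) / 2 = n by omega]

lemma f2_sub_two_mul {d k : ℕ} (hd : 0 < d) (hkd : k ≤ d) :
    f2 d (d - 2 * k) = (-1) ^ (d / 2) * (-1) ^ k := by
  rcases le_total (2 * k) d with hk | hk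
  · exact f2_sub_two_mul_of_two_mul_le hd hk
  have hreflect : (d : ℝ) - 2 * k = -(d - 2 * (d - k : ℕ)) := by
    push_cast [hkd]
    ring
  have hsq : ((-1 : ℝ) ^ d) ^ 2 = 1 := by rw [← pow_mul, mul_comm, pow_mul]; norm_num
  rw [hreflect, f2_neg, f2_sub_two_mul_of_two_mul_le hd (by omega), neg_one_pow_sub hkd]
  linear_combination ((-1 : ℝ) ^ (d / 2) * (-1) ^ k) * hsq

lemma abs_f2_le_one {d : ℕ} (hd : 0 < d) {s : ℝ} (hs : |s| ≤ d) : |f2 d s| ≤ 1 := by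
  wlog h₀ : 0 ≤ s generalizing s
  · have := this (s := -s) (by rwa [abs_neg]) (by linarith)
    rwa [f2_neg, abs_mul, abs_pow, abs_neg, abs_one, one_pow, one_mul] at this
  have hsd := (abs_le.mp hs).2
  obtain ⟨n, rfl | rfl⟩ := Nat.even_or_odd' d
  · obtain ⟨m, rfl⟩ : ∃ m, n = m + 1 := Nat.exists_eq_succ_of_ne_zero (by omega)
    rw [show 2 * (m + 1) = 2 * m + 2 by ring] at hsd ⊢
    push_cast at hsd
    rw [f2_even_eq_zigzag h₀ hsd]
    exact abs_zigzag_le_one (by linarith) (by push_cast; linarith)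
  · push_cast at hsd
    rw [f2_odd_eq_zigzag h₀ hsd]
    exact abs_zigzag_le_one h₀ hsd

/-! ### The discriminator `Fdisc` near the points of `B^d` -/

section Signs

variable {ι : Type*} [Fintype ι] {β : ι → ℝ}

lemma sum_sign_eq_card_sub_two_mul (hβ : ∀ i, β i ≠ 0) :
    ∑ i, Real.sign (β i) = Fintype.card ι - 2 * #{i | β i < 0} := by
  have hsign : ∀ i, Real.sign (β i) = if β i < 0 then -1 else 1 := fun i => by
    split_ifs with h
    · exact Real.sign_of_neg h
    · exact Real.sign_of_pos ((not_lt.mp h).lt_of_ne' (hβ i))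
  have hcard := Finset.card_filter_add_card_filter_not (s := univ) (fun i => β i < 0)
  rw [card_univ] at hcard
  simp only [hsign, Finset.sum_ite, Finset.sum_const, nsmul_eq_mul, mul_neg, mul_one]
  rw [← hcard]
  push_cast
  ring

lemma sign_prod_eq_neg_one_pow (hβ : ∀ i, β i ≠ 0) :
    Real.sign (∏ i, β i) = (-1) ^ #{i | β i < 0} := by
  have hβi : ∀ i, β i = (if β i < 0 then -1 else 1) * |β i| := fun i => by
    split_ifs with h
    · rw [abs_of_neg h]; ring
    · rw [abs_of_nonneg (not_lt.mp h), one_mul]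
  have hprod : ∏ i, β i = (-1) ^ #{i | β i < 0} * ∏ i, |β i| := by
    conv_lhs => rw [Finset.prod_congr rfl fun i _ => hβi i]
    rw [Finset.prod_mul_distrib, Finset.prod_ite, Finset.prod_const, Finset.prod_const_one,
      mul_one]
  have hpos : 0 < ∏ i, |β i| := Finset.prod_pos fun i _ => abs_pos.mpr (hβ i)
  rw [hprod]
  rcases neg_one_pow_eq_or ℝ #{i | β i < 0} with h | h <;> rw [h]
  · rw [one_mul, Real.sign_of_pos hpos]
  · rw [Real.sign_of_neg (by linarith)]

end Signs

lemma Bset_ne_zero {b : ℝ} (hb : b ∈ Bset) : b ≠ 0 := by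
  simp only [Bset, Finset.mem_insert, Finset.mem_singleton] at hb
  rcases hb with rfl | rfl | rfl | rfl <;> norm_num

lemma Fdisc_add_of_mem_piFinset {d : ℕ} (hd : 0 < d) {x0 : ℝ} (hx0 : 0 < x0) (hx0' : 3 * x0 ≤ 1)
    {β t : Fin d → ℝ} (hβ : β ∈ Fintype.piFinset fun _ => Bset) (ht : ∀ i, |t i| ≤ x0) :
    Fdisc d x0 (β + t) = (-1) ^ (d / 2) * Real.sign (∏ i, β i) := by
  have hβB : ∀ i, β i ∈ Bset := Fintype.mem_piFinset.mp hβ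
  have hβ0 : ∀ i, β i ≠ 0 := fun i => Bset_ne_zero (hβB i)
  have hsum : ∑ i, f1 x0 ((β + t) i) = ∑ i, Real.sign (β i) :=
    Finset.sum_congr rfl fun i _ => f1_add_of_mem_Bset hx0 hx0' (hβB i) (ht i)
  have hcard : #{i | β i < 0} ≤ d := (card_filter_le _ _).trans_eq (card_fin d)
  rw [Fdisc, hsum, sum_sign_eq_card_sub_two_mul hβ0, Fintype.card_fin, f2_sub_two_mul hd hcard,
    sign_prod_eq_neg_one_pow hβ0]

lemma Fdisc_add_of_mem_BdPlus {d : ℕ} (hd : 0 < d) {x0 : ℝ} (hx0 : 0 < x0) (hx0' : 3 * x0 ≤ 1)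
    {β t : Fin d → ℝ} (hβ : β ∈ BdPlus d) (ht : ∀ i, |t i| ≤ x0) :
    Fdisc d x0 (β + t) = (-1) ^ (d / 2) := by
  obtain ⟨hβB, hprod⟩ := Finset.mem_filter.mp hβ
  rw [Fdisc_add_of_mem_piFinset hd hx0 hx0' hβB ht, Real.sign_of_pos hprod, mul_one]

lemma Fdisc_add_of_mem_BdMinus {d : ℕ} (hd : 0 < d) {x0 : ℝ} (hx0 : 0 < x0) (hx0' : 3 * x0 ≤ 1)
    {β t : Fin d → ℝ} (hβ : β ∈ BdMinus d) (ht : ∀ i, |t i| ≤ x0) :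
    Fdisc d x0 (β + t) = -(-1) ^ (d / 2) := by
  obtain ⟨hβB, hprod⟩ := Finset.mem_filter.mp hβ
  rw [Fdisc_add_of_mem_piFinset hd hx0 hx0' hβB ht, Real.sign_of_neg hprod, mul_neg_one]

lemma abs_Fdisc_le_one {d : ℕ} (hd : 0 < d) {x0 : ℝ} (hx0 : 0 < x0) (hx0' : 4 * x0 ≤ 1)
    (x : Fin d → ℝ) : |Fdisc d x0 x| ≤ 1 := by
  refine abs_f2_le_one hd ?_
  calc |∑ i, f1 x0 (x i)| ≤ ∑ i, |f1 x0 (x i)| := abs_sum_le_sum_abs _ _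
    _ ≤ ∑ _i : Fin d, 1 := sum_le_sum fun i _ => abs_f1_le_one hx0 hx0' (x i)
    _ = d := by simp

lemma continuous_f1 (x0 : ℝ) : Continuous (f1 x0) := by
  unfold f1
  fun_prop

lemma continuous_f2 (d : ℕ) : Continuous (f2 d) := by
  unfold f2
  by_cases h : Even d <;> simp only [h, ↓reduceIte] <;> fun_prop

lemma continuous_Fdisc (d : ℕ) (x0 : ℝ) : Continuous (Fdisc d x0) :=
  (continuous_f2 d).comp
    (continuous_finsetSum _ fun i _ => (continuous_f1 x0).comp (continuous_apply i))

/-! ### Gaussian tails -/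

section GaussianTail

open Filter Topology

lemma hasDerivAt_gaussianPDFReal (μ : ℝ) (v : ℝ≥0) (x : ℝ) :
    HasDerivAt (gaussianPDFReal μ v) (-((x - μ) / v) * gaussianPDFReal μ v x) x := by
  have hexp : HasDerivAt (fun y => -(y - μ) ^ 2 / (2 * v)) (-((x - μ) / v)) x := by
    refine ((((hasDerivAt_id' x).sub_const μ).fun_pow 2).fun_neg.div_const _).congr_deriv ?_
    norm_num [neg_div, mul_div_mul_left _ _ (two_ne_zero' ℝ)]
  refine (hexp.exp.const_mul (√(2 * Real.pi * v))⁻¹).congr_deriv ?_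
  rw [gaussianPDFReal]
  ring

lemma tendsto_gaussianPDFReal_atTop (μ : ℝ) (v : ℝ≥0) :
    Tendsto (gaussianPDFReal μ v) atTop (𝓝 0) := by
  rcases eq_or_ne v 0 with rfl | hv
  · rw [gaussianPDFReal_zero_var]
    exact tendsto_const_nhds
  have hsq : Tendsto (fun x => (x - μ) ^ 2 / (2 * v)) atTop atTop :=
    ((tendsto_pow_atTop two_ne_zero).comp (tendsto_atTop_add_const_right _ (-μ) tendsto_id)
      ).atTop_div_const (by positivity)
  have hexp := Real.tendsto_exp_atBot.comp (tendsto_neg_atTop_atBot.comp hsq)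
  simpa [gaussianPDFReal_def, neg_div, sub_eq_add_neg] using hexp.const_mul (√(2 * Real.pi * v))⁻¹

/-- Mills' inequality. -/
lemma gaussianReal_Ioi_le {v : ℝ≥0} (hv : v ≠ 0) {a : ℝ} (ha : 0 < a) :
    gaussianReal 0 v (Set.Ioi a) ≤ ENNReal.ofReal (v / a * gaussianPDFReal 0 v a) := by
  have hderiv : ∀ y ∈ Set.Ici a, HasDerivAt (fun y => -(v * gaussianPDFReal 0 v y))
      (y * gaussianPDFReal 0 v y) y := fun y _ => by
    refine ((hasDerivAt_gaussianPDFReal 0 v y).const_mul (v : ℝ)).neg.congr_deriv ?_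
    field_simp
    ring
  have hlim : Tendsto (fun y => -(v * gaussianPDFReal 0 v y)) atTop (𝓝 0) := by
    simpa using ((tendsto_gaussianPDFReal_atTop 0 v).const_mul (v : ℝ)).neg
  have hnonneg : ∀ y ∈ Set.Ioi a, 0 ≤ y * gaussianPDFReal 0 v y := fun y hy =>
    mul_nonneg (ha.trans hy).le (gaussianPDFReal_nonneg 0 v y)
  have hint := integrableOn_Ioi_deriv_of_nonneg' hderiv hnonneg hlim
  rw [gaussianReal_apply_eq_integral 0 hv]
  refine ENNReal.ofReal_le_ofReal ?_
  calc ∫ y in Set.Ioi a, gaussianPDFReal 0 v y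
      ≤ ∫ y in Set.Ioi a, a⁻¹ * (y * gaussianPDFReal 0 v y) := by
        refine setIntegral_mono_on (integrable_gaussianPDFReal 0 v).integrableOn
          (hint.const_mul a⁻¹) measurableSet_Ioi fun y hy => ?_
        rw [← mul_assoc, ← div_eq_inv_mul]
        exact le_mul_of_one_le_left (gaussianPDFReal_nonneg 0 v y)
          ((one_le_div ha).mpr (le_of_lt hy))
    _ = v / a * gaussianPDFReal 0 v a := by
        rw [integral_const_mul, integral_Ioi_of_hasDerivAt_of_tendsto' hderiv hint hlim]
        ring

lemma gaussianReal_lt_abs_le {v : ℝ≥0} (hv : v ≠ 0) {a : ℝ} (ha : 0 < a) :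
    gaussianReal 0 v {y | a < |y|} ≤ ENNReal.ofReal (2 * (v / a * gaussianPDFReal 0 v a)) := by
  have hsplit : {y : ℝ | a < |y|} = (fun y => -y) ⁻¹' Set.Ioi a ∪ Set.Ioi a := by
    ext y
    simp [lt_abs, lt_neg, or_comm]
  have hsymm : gaussianReal 0 v ((fun y => -y) ⁻¹' Set.Ioi a) = gaussianReal 0 v (Set.Ioi a) := by
    rw [← Measure.map_apply measurable_neg measurableSet_Ioi, gaussianReal_map_neg, neg_zero]
  have hpos : 0 ≤ v / a * gaussianPDFReal 0 v a := by
    have := gaussianPDFReal_nonneg 0 v a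
    positivity
  rw [hsplit, two_mul, ENNReal.ofReal_add hpos hpos]
  exact (measure_union_le _ _).trans (add_le_add (hsymm ▸ gaussianReal_Ioi_le hv ha)
    (gaussianReal_Ioi_le hv ha))

end GaussianTail

/-! ### Probabilistic estimates -/

section Probability

variable {Ω : Type*} [MeasurableSpace Ω] {P : Measure Ω}

lemma ae_mem_of_map_eq_uniformOn {α : Type*} [MeasurableSpace α] {ξ : Ω → α} (hξ : Measurable ξ)
    {s : Set α} (hs : MeasurableSet s) (hlaw : P.map ξ = uniformOn s) : ∀ᵐ ω ∂P, ξ ω ∈ s :=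
  ae_of_ae_map hξ.aemeasurable (by rw [hlaw, uniformOn]; exact ae_cond_mem hs)

lemma measure_exists_mem_le {ι α : Type*} [Fintype ι] [MeasurableSpace α] {μ : Measure α}
    [IsProbabilityMeasure μ] {X : Ω → ι → α} (hX : Measurable X)
    (hlaw : P.map X = Measure.pi fun _ => μ) {S : Set α} (hS : MeasurableSet S) :
    P {ω | ∃ i, X ω i ∈ S} ≤ Fintype.card ι * μ S := by
  have hcoord : ∀ i, P {ω | X ω i ∈ S} = μ S := fun i => by
    rw [show {ω | X ω i ∈ S} = X ⁻¹' (Function.eval i ⁻¹' S) from rfl,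
      ← Measure.map_apply hX (measurable_pi_apply i hS), hlaw,
      (measurePreserving_eval _ i).measure_preimage hS.nullMeasurableSet]
  calc P {ω | ∃ i, X ω i ∈ S} = P (⋃ i, {ω | X ω i ∈ S}) := by rw [Set.ofPred_exists]
    _ ≤ ∑ i, P {ω | X ω i ∈ S} := measure_iUnion_fintype_le _ _
    _ = Fintype.card ι * μ S := by simp [hcoord]

lemma ofReal_one_sub_le_of_measure_compl_le [IsProbabilityMeasure P] {s : Set Ω} {a : ℝ}
    (ha : 0 ≤ a) (h : P sᶜ ≤ ENNReal.ofReal a) : ENNReal.ofReal (1 - a) ≤ P s := by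
  have hcover : 1 ≤ P s + P sᶜ := by
    simpa [measure_univ] using measure_union_le (μ := P) s sᶜ
  rw [ENNReal.ofReal_sub _ ha, ENNReal.ofReal_one, tsub_le_iff_right]
  exact hcover.trans (by gcongr)

lemma le_abs_integral_sub_integral [IsProbabilityMeasure P] {u w : Ω → ℝ} (hu : Measurable u)
    (hw : Measurable w) (hu1 : ∀ ω, |u ω| ≤ 1) (hw1 : ∀ ω, |w ω| ≤ 1) {c : ℝ} (hc : |c| = 1) :
    4 * P.real {ω | u ω = c ∧ w ω = -c} - 2 ≤ |∫ ω, u ω ∂P - ∫ ω, w ω ∂P| := by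
  set T := {ω | u ω = c ∧ w ω = -c}
  have hT : MeasurableSet T :=
    (hu (measurableSet_singleton c)).inter (hw (measurableSet_singleton (-c)))
  have hui : Integrable u P := .of_bound hu.aestronglyMeasurable 1 (ae_of_all _ hu1)
  have hwi : Integrable w P := .of_bound hw.aestronglyMeasurable 1 (ae_of_all _ hw1)
  have hind : Integrable (T.indicator fun _ => (4 : ℝ)) P := (integrable_const _).indicator hT
  have hpointwise : ∀ ω, T.indicator (fun _ => (4 : ℝ)) ω - 2 ≤ c * (u ω - w ω) := fun ω => by
    by_cases hω : ω ∈ T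
    · rw [Set.indicator_of_mem hω, hω.1, hω.2]
      have hc2 : c * c = 1 := by rw [← abs_mul_abs_self, hc, one_mul]
      linarith
    · rw [Set.indicator_of_notMem hω]
      have : |c * (u ω - w ω)| ≤ 2 := by
        rw [abs_mul, hc, one_mul]
        linarith [abs_sub (u ω) (w ω), hu1 ω, hw1 ω]
      linarith [neg_abs_le (c * (u ω - w ω))]
  calc 4 * P.real T - 2 = ∫ ω, (T.indicator (fun _ => (4 : ℝ)) ω - 2) ∂P := by
        rw [integral_sub hind (integrable_const _), integral_indicator_const _ hT, integral_const,
          smul_eq_mul, smul_eq_mul, probReal_univ, mul_comm, one_mul]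
    _ ≤ ∫ ω, c * (u ω - w ω) ∂P :=
        integral_mono (hind.sub (integrable_const _)) ((hui.sub hwi).const_mul c) hpointwise
    _ = c * (∫ ω, u ω ∂P - ∫ ω, w ω ∂P) := by rw [integral_const_mul, integral_sub hui hwi]
    _ ≤ |∫ ω, u ω ∂P - ∫ ω, w ω ∂P| := by
        simpa [abs_mul, hc] using le_abs_self (c * (∫ ω, u ω ∂P - ∫ ω, w ω ∂P))

end Probability

lemma mul_mills_bound_eq_of_log_eq {d x0 ε σ : ℝ} {v : ℝ≥0} (hd : 0 < d) (hx0 : 0 < x0)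
    (hε : 0 < ε) (hσ : 0 < σ) (hv : (v : ℝ) = σ ^ 2)
    (heq : x0 ^ 2 / (2 * σ ^ 2) = Real.log (d * σ / (Real.sqrt (2 * Real.pi) * ε * x0))) :
    d * (2 * (v / x0 * gaussianPDFReal 0 v x0)) = 2 * ε := by
  have hexp : Real.exp (-x0 ^ 2 / (2 * σ ^ 2)) = Real.sqrt (2 * Real.pi) * ε * x0 / (d * σ) := by
    rw [neg_div, heq, Real.exp_neg, Real.exp_log (by positivity), inv_div]
  have hsqrt : Real.sqrt (2 * Real.pi * σ ^ 2) = Real.sqrt (2 * Real.pi) * σ := by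
    rw [Real.sqrt_mul (by positivity), Real.sqrt_sq hσ.le]
  rw [gaussianPDFReal, hv, sub_zero, hexp, hsqrt]
  field_simp

/-! ### The noisy samples -/

section NoisySamples

variable {Ω : Type*} [MeasurableSpace Ω] {P : Measure Ω} {d : ℕ} {x0 ε σ : ℝ}
  {ξp ξm X : Ω → Fin d → ℝ}

lemma measure_exists_lt_abs_le (hd : 0 < d) (hx0 : 0 < x0) (hε : 0 < ε) (hσ : 0 < σ)
    (heq : x0 ^ 2 / (2 * σ ^ 2) = Real.log (d * σ / (Real.sqrt (2 * Real.pi) * ε * x0)))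
    (hXm : Measurable X)
    (hlawX : P.map X = Measure.pi fun _ : Fin d => gaussianReal 0 ⟨σ ^ 2, sq_nonneg σ⟩) :
    P {ω | ∃ i, x0 < |X ω i|} ≤ ENNReal.ofReal (2 * ε) := by
  -- instance search does not see through the anonymous constructor `⟨σ ^ 2, _⟩ : ℝ≥0`
  have := instIsProbabilityMeasureGaussianReal 0 ⟨σ ^ 2, sq_nonneg σ⟩
  refine (measure_exists_mem_le hXm hlawX (S := {y | x0 < |y|})
    (measurableSet_lt measurable_const measurable_abs)).trans ?_
  rw [Fintype.card_fin, ← mul_mills_bound_eq_of_log_eq (v := ⟨σ ^ 2, sq_nonneg σ⟩)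
    (by positivity) hx0 hε hσ rfl heq, ENNReal.ofReal_mul (by positivity), ENNReal.ofReal_natCast]
  gcongr
  exact gaussianReal_lt_abs_le (fun h => pow_ne_zero 2 hσ.ne' (congrArg Subtype.val h)) hx0

lemma ofReal_one_sub_le_measure_Fdisc_eq [IsProbabilityMeasure P] (hd : 0 < d) (hx0 : 0 < x0)
    (hx0' : 3 * x0 ≤ 1) (hε : 0 < ε) (hσ : 0 < σ)
    (heq : x0 ^ 2 / (2 * σ ^ 2) = Real.log (d * σ / (Real.sqrt (2 * Real.pi) * ε * x0)))
    (hξpm : Measurable ξp) (hξmm : Measurable ξm) (hXm : Measurable X)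
    (hlawp : P.map ξp = uniformOn (BdPlus d : Set (Fin d → ℝ)))
    (hlawm : P.map ξm = uniformOn (BdMinus d : Set (Fin d → ℝ)))
    (hlawX : P.map X = Measure.pi fun _ : Fin d => gaussianReal 0 ⟨σ ^ 2, sq_nonneg σ⟩) :
    ENNReal.ofReal (1 - 2 * ε) ≤ P {ω | Fdisc d x0 (ξp ω + X ω) = (-1) ^ (d / 2) ∧
      Fdisc d x0 (ξm ω + X ω) = -(-1) ^ (d / 2)} := by
  have hgood : ∀ᵐ ω ∂P, (∀ i, |X ω i| ≤ x0) →
      Fdisc d x0 (ξp ω + X ω) = (-1) ^ (d / 2) ∧ Fdisc d x0 (ξm ω + X ω) = -(-1) ^ (d / 2) := by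
    filter_upwards [ae_mem_of_map_eq_uniformOn hξpm (BdPlus d).finite_toSet.measurableSet hlawp,
      ae_mem_of_map_eq_uniformOn hξmm (BdMinus d).finite_toSet.measurableSet hlawm] with ω hp hm hX
    exact ⟨Fdisc_add_of_mem_BdPlus hd hx0 hx0' hp hX, Fdisc_add_of_mem_BdMinus hd hx0 hx0' hm hX⟩
  refine ofReal_one_sub_le_of_measure_compl_le (by linarith) ((measure_mono_ae ?_).trans
    (measure_exists_lt_abs_le hd hx0 hε hσ heq hXm hlawX))
  filter_upwards [hgood] with ω hω hbad
  exact (by simpa using mt hω hbad : ∃ i, x0 < |X ω i|)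

end NoisySamples

lemma neg_one_pow_div_two (d : ℕ) :
    (-1 : ℝ) ^ (d / 2) = if d % 4 = 0 ∨ d % 4 = 1 then 1 else -1 := by
  split_ifs with h
  · exact Even.neg_one_pow (Nat.even_iff.mpr (by omega))
  · exact Odd.neg_one_pow (Nat.odd_iff.mpr (by omega))

theorem Z_pm_high_prob_general
    {Ω : Type*} [MeasurableSpace Ω] (P : Measure Ω) [IsProbabilityMeasure P]
    (d : ℕ) (hd : 3 ≤ d) (x0 ε σ : ℝ) (hx0 : x0 ∈ Set.Ioo (0 : ℝ) (1/4))
    (hε : ε ∈ Set.Ioo (0 : ℝ) 1) (hσ : 0 < σ)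
    (heq : x0 ^ 2 / (2 * σ ^ 2) =
      Real.log ((d : ℝ) * σ / (Real.sqrt (2 * Real.pi) * ε * x0)))
    (ξp ξm X : Ω → (Fin d → ℝ))
    (hξpm : Measurable ξp) (hξmm : Measurable ξm) (hXm : Measurable X)
    (hlawp : Measure.map ξp P = uniformOn (BdPlus d : Set (Fin d → ℝ)))
    (hlawm : Measure.map ξm P = uniformOn (BdMinus d : Set (Fin d → ℝ)))
    (hlawX : Measure.map X P =
      Measure.pi fun _ : Fin d => gaussianReal 0 ⟨σ ^ 2, sq_nonneg σ⟩) :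
    ENNReal.ofReal (1 - 2 * ε) ≤
      P {ω | if d % 4 = 0 ∨ d % 4 = 1 then
              Fdisc d x0 (ξp ω + X ω) = 1 ∧ Fdisc d x0 (ξm ω + X ω) = -1
            else
              Fdisc d x0 (ξp ω + X ω) = -1 ∧ Fdisc d x0 (ξm ω + X ω) = 1} ∧
    2 - 8 * ε ≤
      |(∫ ω, Fdisc d x0 (ξp ω + X ω) ∂P) - ∫ ω, Fdisc d x0 (ξm ω + X ω) ∂P| := by
  obtain ⟨hx0, hx0'⟩ := hx0
  have hd0 : 0 < d := by omega
  have hevent : ∀ a b : ℝ, (if d % 4 = 0 ∨ d % 4 = 1 then a = 1 ∧ b = -1 else a = -1 ∧ b = 1) ↔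
      a = (-1) ^ (d / 2) ∧ b = -(-1) ^ (d / 2) := fun a b => by
    rw [neg_one_pow_div_two]
    split_ifs <;> simp
  have hprob := ofReal_one_sub_le_measure_Fdisc_eq hd0 hx0 (by linarith) hε.1 hσ heq hξpm hξmm hXm
    hlawp hlawm hlawX
  simp only [hevent]
  refine ⟨hprob, ?_⟩
  have hmeas : ∀ ξ : Ω → Fin d → ℝ, Measurable ξ → Measurable fun ω => Fdisc d x0 (ξ ω + X ω) :=
    fun ξ hξ => (continuous_Fdisc d x0).measurable.comp (hξ.add hXm)
  have hbound := abs_Fdisc_le_one hd0 hx0 (by linarith)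
  have hmean := le_abs_integral_sub_integral (P := P) (hmeas ξp hξpm) (hmeas ξm hξmm)
    (fun ω => hbound _) (fun ω => hbound _) (abs_neg_one_pow (d / 2))
  have hreal := (ENNReal.ofReal_le_iff_le_toReal (measure_ne_top _ _)).mp hprob
  rw [measureReal_def] at hmean
  linarith

theorem Z_pm_high_prob
    {Ω : Type*} [MeasurableSpace Ω] (P : Measure Ω) [IsProbabilityMeasure P]
    (d : ℕ) (hd : 3 ≤ d) (x0 ε σ : ℝ) (hx0 : x0 ∈ Set.Ioo (0 : ℝ) (1/4))
    (hε : ε ∈ Set.Ioo (0 : ℝ) 1) (hσ : 0 < σ)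
    (heq : x0 ^ 2 / (2 * σ ^ 2) =
      Real.log ((d : ℝ) * σ / (Real.sqrt (2 * Real.pi) * ε * x0)))
    (ξp ξm X : Ω → (Fin d → ℝ))
    (hξpm : Measurable ξp) (hξmm : Measurable ξm) (hXm : Measurable X)
    (hlawp : Measure.map ξp P = uniformOn (BdPlus d : Set (Fin d → ℝ)))
    (hlawm : Measure.map ξm P = uniformOn (BdMinus d : Set (Fin d → ℝ)))
    (hlawX : Measure.map X P =
      Measure.pi fun _ : Fin d => gaussianReal 0 ⟨σ ^ 2, sq_nonneg σ⟩)
    (hindep : IndepFun (fun ω => (ξp ω, ξm ω)) X P) :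
    ENNReal.ofReal (1 - 2 * ε) ≤
      P {ω | if d % 4 = 0 ∨ d % 4 = 1 then
              Fdisc d x0 (ξp ω + X ω) = 1 ∧ Fdisc d x0 (ξm ω + X ω) = -1
            else
              Fdisc d x0 (ξp ω + X ω) = -1 ∧ Fdisc d x0 (ξm ω + X ω) = 1} ∧
    2 - 8 * ε ≤
      |(∫ ω, Fdisc d x0 (ξp ω + X ω) ∂P) - ∫ ω, Fdisc d x0 (ξm ω + X ω) ∂P| :=
  Z_pm_high_prob_general P d hd x0 ε σ hx0 hε hσ heq ξp ξm X hξpm hξmm hXm hlawp hlawm hlawX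

end
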